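/- Contraction estimate for the scattering operator: let L > 0, let σ : [0,L] → ℝ be continuous nonnegative, and let g : [0,L] → ℝ be measurable with |g(t)| ≤ σ(t)·C for all t, where C ≥ 0. Then |∫₀^L exp(-∫₀^t σ(s) ds)·g(t) dt| ≤ (1 - exp(-∫₀^L σ(s) ds))·C < C whenever C > 0 and ∫₀^L σ > 0. -/

import Mathlib

/-!
With `S t = ∫₀ᵗ σ`, the weight `σ t · exp (-S t)` is the derivative of `-exp (-S t)`, so it
integrates to `1 - exp (-S L)`. Bounding `|g|` by `σ · C` under the integral therefore gives the
estimate, and the factor `1 - exp (-S L)` is strictly below `1`.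
-/

open MeasureTheory Real intervalIntegral

theorem hasDerivAt_neg_exp_neg_integral {σ : ℝ → ℝ} (hσ : Continuous σ) (a t : ℝ) :
    HasDerivAt (fun u => -exp (-∫ s in a..u, σ s)) (σ t * exp (-∫ s in a..t, σ s)) t := by
  have hS : HasDerivAt (fun u => ∫ s in a..u, σ s) (σ t) t :=
    (hσ.integral_hasStrictDerivAt a t).hasDerivAt
  exact hS.fun_neg.exp.fun_neg.congr_deriv (by ring)

theorem continuous_mul_exp_neg_integral {σ : ℝ → ℝ} (hσ : Continuous σ) (a : ℝ) :
    Continuous fun t => σ t * exp (-∫ s in a..t, σ s) :=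
  hσ.mul (continuous_primitive hσ.intervalIntegrable a).neg.rexp

theorem integral_mul_exp_neg_integral {σ : ℝ → ℝ} (hσ : Continuous σ) (a b : ℝ) :
    ∫ t in a..b, σ t * exp (-∫ s in a..t, σ s) = 1 - exp (-∫ s in a..b, σ s) := by
  rw [integral_eq_sub_of_hasDerivAt (fun t _ => hasDerivAt_neg_exp_neg_integral hσ a t)
    ((continuous_mul_exp_neg_integral hσ a).intervalIntegrable a b)]
  simp only [integral_same, neg_zero, exp_zero]
  ring

theorem abs_integral_exp_neg_integral_mul_le {σ g : ℝ → ℝ} {a b C : ℝ} (hab : a ≤ b)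
    (hσ : Continuous σ) (hdom : ∀ t ∈ Set.Icc a b, |g t| ≤ σ t * C) :
    |∫ t in a..b, exp (-∫ s in a..t, σ s) * g t| ≤ (1 - exp (-∫ s in a..b, σ s)) * C := by
  have hbound : ∀ t ∈ Set.Ioc a b,
      ‖exp (-∫ s in a..t, σ s) * g t‖ ≤ σ t * exp (-∫ s in a..t, σ s) * C := fun t ht => by
    rw [Real.norm_eq_abs, abs_mul, abs_exp]
    nlinarith [hdom t (Set.Ioc_subset_Icc_self ht), exp_pos (-∫ s in a..t, σ s)]
  calc |∫ t in a..b, exp (-∫ s in a..t, σ s) * g t|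
      ≤ ∫ t in a..b, σ t * exp (-∫ s in a..t, σ s) * C :=
        norm_integral_le_of_norm_le hab (ae_of_all _ hbound)
          (((continuous_mul_exp_neg_integral hσ a).mul continuous_const).intervalIntegrable a b)
    _ = (1 - exp (-∫ s in a..b, σ s)) * C := by
        rw [intervalIntegral.integral_mul_const, integral_mul_exp_neg_integral hσ]

theorem scattering_contraction_general
    (L : ℝ) (hL : 0 < L) (σ : ℝ → ℝ) (hσ : Continuous σ)
    (g : ℝ → ℝ) (C : ℝ)
    (hdom : ∀ t ∈ Set.Icc (0:ℝ) L, |g t| ≤ σ t * C)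
    (hCpos : 0 < C) :
    |∫ t in (0:ℝ)..L, Real.exp (-∫ s in (0:ℝ)..t, σ s) * g t| ≤
        (1 - Real.exp (-∫ s in (0:ℝ)..L, σ s)) * C ∧
      (1 - Real.exp (-∫ s in (0:ℝ)..L, σ s)) * C < C :=
  ⟨abs_integral_exp_neg_integral_mul_le hL.le hσ hdom,
    by nlinarith [mul_pos (exp_pos (-∫ s in (0:ℝ)..L, σ s)) hCpos]⟩

theorem scattering_contraction
    (L : ℝ) (hL : 0 < L) (σ : ℝ → ℝ) (hσ : Continuous σ)
    (hσ0 : ∀ t ∈ Set.Icc (0:ℝ) L, 0 ≤ σ t)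
    (g : ℝ → ℝ) (hg : Measurable g) (C : ℝ) (hC0 : 0 ≤ C)
    (hdom : ∀ t ∈ Set.Icc (0:ℝ) L, |g t| ≤ σ t * C)
    (hCpos : 0 < C) (hσint : 0 < ∫ s in (0:ℝ)..L, σ s) :
    |∫ t in (0:ℝ)..L, Real.exp (-∫ s in (0:ℝ)..t, σ s) * g t| ≤
        (1 - Real.exp (-∫ s in (0:ℝ)..L, σ s)) * C ∧
      (1 - Real.exp (-∫ s in (0:ℝ)..L, σ s)) * C < C :=
  scattering_contraction_general L hL σ hσ g C hdom hCpos
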